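/- Let n ≥ 1, let μ : 2^[n] → ℂ be a table with μ_∅ = 1, and let λ ∈ ℂⁿ. Define the transformed table μ' by μ'_I = ∑_{S ⊆ I} μ_S · ∏_{i ∈ I∖S} λ_i (this is the coefficient table of M(x)·∏_{i=1}^n (1 + λ_i x_i) modulo ⟨x₁²,…,x_n²⟩, i.e. the action of the unipotent group U(2)ⁿ). Let k and k' be the cumulants of μ and μ' respectively, computed via k_I = ∑_{π ∈ Π(I)} (−1)^{|π|−1}(|π|−1)! ∏_{B ∈ π} μ_B. Then k'_I = k_I for every I with |I| ≥ 2, and k'_{{i}} = k_{{i}} + λ_i for every i ∈ [n]. In other words, U(2)ⁿ acts on cumulant coordinates by translating the first-order cumulants and fixing all higher cumulants. -/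

import Mathlib

open Finset

/-- The cumulants of a table `μ` indexed by subsets of `[n]`. -/
noncomputable def cumulant {n : ℕ} (μ : Finset (Fin n) → ℂ) (I : Finset (Fin n)) : ℂ :=
  ∑ π : Finpartition I,
    (-1 : ℂ) ^ (π.parts.card - 1) * (Nat.factorial (π.parts.card - 1) : ℂ) *
      ∏ B ∈ π.parts, μ B

/-!
`U(2)ⁿ` is generated by its one-parameter subgroups in single coordinates, so it suffices to
treat `λ = c • eⱼ`, which sends `μ_I` to `μ_I + c μ_{I∖j}` for `j ∈ I`. Exactly one block of a
partition of `I ∋ j` contains `j`, so `k_I` changes by `c ∑_π w(|π|) ∏_{B ∈ π} μ_{B∖j}` with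
`w(k) = (-1)^(k-1) (k-1)!`. Every partition of `I` arises uniquely from a partition `σ` of `I ∖ j`
by adding `{j}` as a block or adding `j` to a block of `σ`; as `μ_∅ = 1` both give
`∏_{B ∈ σ} μ_B`, so a `σ` with `k ≥ 1` blocks contributes `(w(k + 1) + k w(k)) ∏_{B ∈ σ} μ_B = 0`.
First-order cumulants are first moments, which `λ` translates.
-/

namespace Finpartition

variable {α : Type*} [DecidableEq α] {s : Finset α} {a : α}

lemma notMem_of_mem_parts_erase (σ : Finpartition (s.erase a)) {B : Finset α}
    (hB : B ∈ σ.parts) : a ∉ B :=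
  fun h ↦ notMem_erase a s (σ.le hB h)

def extendSingleton (ha : a ∈ s) (σ : Finpartition (s.erase a)) : Finpartition s :=
  σ.extend (singleton_ne_empty a) (disjoint_singleton_right.2 (notMem_erase a s))
    (by rw [sup_eq_union, union_comm, ← insert_eq, insert_erase ha])

lemma parts_extendSingleton (ha : a ∈ s) (σ : Finpartition (s.erase a)) :
    (extendSingleton ha σ).parts = insert {a} σ.parts := rfl

lemma card_parts_extendSingleton (ha : a ∈ s) (σ : Finpartition (s.erase a)) :
    #(extendSingleton ha σ).parts = #σ.parts + 1 :=
  card_extend _ _ _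

def insertIntoPart (ha : a ∈ s) (σ : Finpartition (s.erase a)) {B : Finset α}
    (hB : B ∈ σ.parts) : Finpartition s where
  parts := insert (insert a B) (σ.parts.erase B)
  supIndep := by
    rw [supIndep_iff_pairwiseDisjoint, coe_insert]
    refine (σ.disjoint.subset (coe_subset.2 (erase_subset _ _))).insert fun C hC _ ↦ ?_
    obtain ⟨hCB, hC⟩ := mem_erase.1 hC
    exact disjoint_insert_left.2 ⟨σ.notMem_of_mem_parts_erase hC, σ.disjoint hB hC hCB.symm⟩
  sup_parts := by
    have h : (insert B (σ.parts.erase B)).sup id = s.erase a := by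
      rw [insert_erase hB, σ.sup_parts]
    rw [sup_insert, id_eq, sup_eq_union] at h
    rw [sup_insert, id_eq, sup_eq_union, insert_union, h, insert_erase ha]
  bot_notMem h := (mem_insert.1 h).elim (insert_ne_empty a B).symm
    fun h ↦ σ.bot_notMem (mem_of_mem_erase h)

lemma parts_insertIntoPart (ha : a ∈ s) (σ : Finpartition (s.erase a)) {B : Finset α}
    (hB : B ∈ σ.parts) : (insertIntoPart ha σ hB).parts = insert (insert a B) (σ.parts.erase B) :=
  rfl

lemma card_parts_insertIntoPart (ha : a ∈ s) (σ : Finpartition (s.erase a)) {B : Finset α}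
    (hB : B ∈ σ.parts) : #(insertIntoPart ha σ hB).parts = #σ.parts := by
  rw [parts_insertIntoPart, card_insert_of_notMem, card_erase_add_one hB]
  exact fun h ↦ σ.notMem_of_mem_parts_erase (mem_of_mem_erase h) (mem_insert_self a B)

/-- `none` adjoins `{a}` as a new part, `some B` inserts `a` into the part `B`. -/
def insertElem (ha : a ∈ s) : (Σ σ : Finpartition (s.erase a), Option σ.parts) → Finpartition s
  | ⟨σ, none⟩ => extendSingleton ha σ
  | ⟨σ, some B⟩ => insertIntoPart ha σ B.2

def eraseElem (π : Finpartition s) (a : α) : Finpartition (s.erase a) :=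
  (π.avoid {a}).copy (sdiff_singleton_eq_erase a s)

lemma parts_eraseElem (π : Finpartition s) (ha : a ∈ s) :
    (π.eraseElem a).parts = (insert ((π.part a).erase a) (π.parts.erase (π.part a))).erase ∅ := by
  have hother : ∀ C ∈ π.parts.erase (π.part a), C.erase a = C := fun C hC ↦
    erase_eq_of_notMem fun haC ↦
      ne_of_mem_erase hC (π.part_eq_of_mem (mem_of_mem_erase hC) haC).symm
  change (π.parts.image (· \ {a})).erase ∅ = _
  simp_rw [sdiff_singleton_eq_erase]
  conv_lhs => rw [← insert_erase (π.part_mem.2 ha), image_insert, image_congr hother, image_id']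

lemma part_extendSingleton (ha : a ∈ s) (σ : Finpartition (s.erase a)) :
    (extendSingleton ha σ).part a = {a} :=
  part_eq_of_mem _ (mem_insert_self _ _) (mem_singleton_self a)

lemma part_insertIntoPart (ha : a ∈ s) (σ : Finpartition (s.erase a)) {B : Finset α}
    (hB : B ∈ σ.parts) : (insertIntoPart ha σ hB).part a = insert a B :=
  part_eq_of_mem _ (mem_insert_self _ _) (mem_insert_self a B)

lemma eraseElem_insertElem (ha : a ∈ s) (p : Σ σ : Finpartition (s.erase a), Option σ.parts) :
    (insertElem ha p).eraseElem a = p.1 := by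
  obtain ⟨σ, _ | ⟨B, hB⟩⟩ := p <;> ext1 <;> rw [parts_eraseElem _ ha]
  · have h : {a} ∉ σ.parts := fun h ↦ σ.notMem_of_mem_parts_erase h (mem_singleton_self a)
    rw [insertElem, part_extendSingleton, parts_extendSingleton, erase_singleton,
      erase_insert h, erase_insert σ.empty_notMem_parts]
  · have h : insert a B ∉ σ.parts.erase B := fun h ↦
      σ.notMem_of_mem_parts_erase (mem_of_mem_erase h) (mem_insert_self a B)
    rw [insertElem, part_insertIntoPart, parts_insertIntoPart, erase_insert h,
      erase_insert (σ.notMem_of_mem_parts_erase hB), insert_erase hB,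
      erase_eq_of_notMem σ.empty_notMem_parts]

lemma erase_part_insertElem (ha : a ∈ s) (σ : Finpartition (s.erase a)) (o : Option σ.parts) :
    ((insertElem ha ⟨σ, o⟩).part a).erase a = o.elim ∅ Subtype.val := by
  obtain _ | ⟨B, hB⟩ := o
  · rw [insertElem, part_extendSingleton, erase_singleton, Option.elim_none]
  · rw [insertElem, part_insertIntoPart, erase_insert (σ.notMem_of_mem_parts_erase hB),
      Option.elim_some]

lemma insertElem_injective (ha : a ∈ s) : Function.Injective (insertElem ha) := by
  rintro ⟨σ₁, o₁⟩ ⟨σ₂, o₂⟩ h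
  obtain rfl : σ₁ = σ₂ := by simpa only [eraseElem_insertElem] using congrArg (eraseElem · a) h
  have ho := congrArg (fun π ↦ (π.part a).erase a) h
  simp only [erase_part_insertElem] at ho
  obtain _ | ⟨B₁, hB₁⟩ := o₁ <;> obtain _ | ⟨B₂, hB₂⟩ := o₂
  · rfl
  · exact absurd ho.symm (σ₁.ne_empty hB₂)
  · exact absurd ho (σ₁.ne_empty hB₁)
  · obtain rfl := ho
    rfl

lemma insertElem_surjective (ha : a ∈ s) : Function.Surjective (insertElem ha) := by
  intro π
  have hpart := π.part_mem.2 ha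
  obtain ⟨B, hBdef⟩ : ∃ B, (π.part a).erase a = B := ⟨_, rfl⟩
  by_cases hB : B = ∅
  · have hsingleton : π.part a = {a} :=
      ((erase_eq_empty_iff _ _).1 (hBdef.trans hB)).resolve_left (π.ne_empty hpart)
    refine ⟨⟨π.eraseElem a, none⟩, Finpartition.ext ?_⟩
    rw [insertElem, parts_extendSingleton, parts_eraseElem _ ha, hBdef, hB,
      erase_insert fun h ↦ π.empty_notMem_parts (mem_of_mem_erase h), ← hsingleton,
      insert_erase hpart]
  · have hBnotMem : B ∉ π.parts.erase (π.part a) := fun h ↦ by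
      obtain ⟨x, hx⟩ := nonempty_iff_ne_empty.2 hB
      have hxa : x ∈ π.part a := mem_of_mem_erase (hBdef ▸ hx)
      exact ne_of_mem_erase h (π.eq_of_mem_parts (mem_of_mem_erase h) hpart hx hxa)
    have hσ : (π.eraseElem a).parts = insert B (π.parts.erase (π.part a)) := by
      rw [parts_eraseElem _ ha, hBdef, erase_eq_of_notMem]
      exact fun h ↦ (mem_insert.1 h).elim (fun h ↦ hB h.symm)
        fun h ↦ π.empty_notMem_parts (mem_of_mem_erase h)
    refine ⟨⟨π.eraseElem a, some ⟨B, hσ ▸ mem_insert_self _ _⟩⟩, Finpartition.ext ?_⟩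
    change insert (insert a B) ((π.eraseElem a).parts.erase B) = π.parts
    rw [hσ, erase_insert hBnotMem, ← hBdef,
      insert_erase (π.mem_part ha), insert_erase hpart]

lemma insertElem_bijective (ha : a ∈ s) : Function.Bijective (insertElem ha) :=
  ⟨insertElem_injective ha, insertElem_surjective ha⟩

lemma prod_parts_insertElem_erase {M : Type*} [CommMonoid M] (ha : a ∈ s) {f : Finset α → M}
    (hf : f ∅ = 1) (p : Σ σ : Finpartition (s.erase a), Option σ.parts) :
    ∏ B ∈ (insertElem ha p).parts, f (B.erase a) = ∏ B ∈ p.1.parts, f B := by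
  obtain ⟨σ, o⟩ := p
  have hσ : ∏ B ∈ σ.parts, f (B.erase a) = ∏ B ∈ σ.parts, f B :=
    prod_congr rfl fun B hB ↦ by rw [erase_eq_of_notMem (σ.notMem_of_mem_parts_erase hB)]
  obtain _ | ⟨B, hB⟩ := o
  · rw [insertElem, parts_extendSingleton, prod_insert
      fun h ↦ σ.notMem_of_mem_parts_erase h (mem_singleton_self a), erase_singleton, hf, one_mul,
      hσ]
  · have h : insert a B ∉ σ.parts.erase B := fun h ↦
      σ.notMem_of_mem_parts_erase (mem_of_mem_erase h) (mem_insert_self a B)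
    rw [insertElem, parts_insertIntoPart, prod_insert h,
      erase_insert (σ.notMem_of_mem_parts_erase hB), ← hσ, ← mul_prod_erase _ _ hB,
      erase_eq_of_notMem (σ.notMem_of_mem_parts_erase hB)]

lemma prod_parts_add_ite_mem {R : Type*} [CommSemiring R] (π : Finpartition s) (ha : a ∈ s)
    (μ : Finset α → R) (c : R) :
    ∏ B ∈ π.parts, (μ B + if a ∈ B then c * μ (B.erase a) else 0) =
      ∏ B ∈ π.parts, μ B + c * ∏ B ∈ π.parts, μ (B.erase a) := by
  have hpart := π.part_mem.2 ha
  have hother : ∀ B ∈ π.parts.erase (π.part a), a ∉ B := fun B hB haB ↦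
    ne_of_mem_erase hB (π.part_eq_of_mem (mem_of_mem_erase hB) haB).symm
  have h₁ : ∏ B ∈ π.parts.erase (π.part a), (μ B + if a ∈ B then c * μ (B.erase a) else 0) =
      ∏ B ∈ π.parts.erase (π.part a), μ B :=
    prod_congr rfl fun B hB ↦ by rw [if_neg (hother B hB), add_zero]
  have h₂ : ∏ B ∈ π.parts.erase (π.part a), μ (B.erase a) =
      ∏ B ∈ π.parts.erase (π.part a), μ B :=
    prod_congr rfl fun B hB ↦ by rw [erase_eq_of_notMem (hother B hB)]
  rw [← mul_prod_erase _ _ hpart, ← mul_prod_erase _ (fun B ↦ μ B) hpart,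
    ← mul_prod_erase _ (fun B ↦ μ (B.erase a)) hpart, if_pos (π.mem_part ha), h₁, h₂]
  ring

end Finpartition

/-- The Möbius function `μ(π, 1̂)` of the partition lattice, for a partition `π` with `k` blocks. -/
def cumulantCoeff (R : Type*) [CommRing R] (k : ℕ) : R :=
  (-1) ^ (k - 1) * (Nat.factorial (k - 1) : R)

lemma cumulantCoeff_add_two {R : Type*} [CommRing R] (k : ℕ) :
    cumulantCoeff R (k + 2) + (k + 1) * cumulantCoeff R (k + 1) = 0 := by
  change (-1) ^ (k + 1) * ((k + 1).factorial : R) + (k + 1) * ((-1) ^ k * (k.factorial : R)) = 0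
  push_cast [Nat.factorial_succ, pow_succ]
  ring

theorem Finpartition.sum_cumulantCoeff_mul_prod_erase_eq_zero {α R : Type*} [DecidableEq α]
    [CommRing R] {s : Finset α} {a : α} (ha : a ∈ s) (hs : 1 < #s) {f : Finset α → R}
    (hf : f ∅ = 1) :
    ∑ π : Finpartition s, cumulantCoeff R #π.parts * ∏ B ∈ π.parts, f (B.erase a) = 0 := by
  rw [← (insertElem_bijective ha).sum_comp, ← univ_sigma_univ, sum_sigma]
  refine sum_eq_zero fun σ _ ↦ ?_
  have hσ : s.erase a ≠ ∅ :=
    nonempty_iff_ne_empty.1 (card_pos.1 (by rw [card_erase_of_mem ha]; omega))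
  obtain ⟨k, hk⟩ : ∃ k, #σ.parts = k + 1 :=
    Nat.exists_eq_add_one.2 (card_pos.2 (σ.parts_nonempty hσ))
  simp only [prod_parts_insertElem_erase ha hf]
  rw [Fintype.sum_option]
  simp only [insertElem, card_parts_extendSingleton, card_parts_insertIntoPart]
  rw [sum_const, card_univ, Fintype.card_coe, nsmul_eq_mul, hk]
  push_cast
  linear_combination (∏ B ∈ σ.parts, f B) * cumulantCoeff_add_two (R := R) k

section UnipotentAct

variable {α R : Type*} [DecidableEq α] [CommSemiring R]

def unipotentAct (lam : α → R) (μ : Finset α → R) (I : Finset α) : R :=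
  ∑ S ∈ I.powerset, μ S * ∏ i ∈ I \ S, lam i

lemma unipotentAct_apply_empty (lam : α → R) (μ : Finset α → R) :
    unipotentAct lam μ ∅ = μ ∅ := by
  simp [unipotentAct]

lemma unipotentAct_apply_singleton (lam : α → R) (μ : Finset α → R) (i : α) :
    unipotentAct lam μ {i} = μ {i} + μ ∅ * lam i := by
  rw [unipotentAct, ← insert_empty, sum_powerset_insert (notMem_empty i)]
  simp [add_comm]

lemma unipotentAct_zero (μ : Finset α → R) : unipotentAct 0 μ = μ := by
  funext I
  rw [unipotentAct, sum_eq_single_of_mem I (mem_powerset_self I), Finset.sdiff_self, prod_empty,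
    mul_one]
  intro S hS hSI
  obtain ⟨i, hi⟩ : (I \ S).Nonempty :=
    sdiff_nonempty.2 fun h ↦ hSI (Subset.antisymm (mem_powerset.1 hS) h)
  rw [prod_eq_zero hi rfl, mul_zero]

lemma unipotentAct_single (a : α) (c : R) (μ : Finset α → R) (I : Finset α) :
    unipotentAct (Pi.single a c) μ I = μ I + if a ∈ I then c * μ (I.erase a) else 0 := by
  have hvanish : ∀ S ∈ I.powerset, S ≠ I → S ≠ I.erase a →
      μ S * ∏ i ∈ I \ S, Pi.single a c i = 0 := by
    intro S hS hSI hSa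
    obtain ⟨i, hi, hia⟩ : ∃ i ∈ I \ S, i ≠ a := by
      by_contra! h
      rcases subset_singleton_iff.1 fun i hi ↦ mem_singleton.2 (h i hi) with h | h
      · exact hSI (Subset.antisymm (mem_powerset.1 hS) (sdiff_eq_empty_iff_subset.1 h))
      · rw [← sdiff_singleton_eq_erase, ← h, Finset.sdiff_sdiff_eq_self (mem_powerset.1 hS)] at hSa
        exact hSa rfl
    rw [prod_eq_zero hi (by simp [hia]), mul_zero]
  rw [unipotentAct]
  split_ifs with ha
  · rw [sum_eq_add_of_mem I (I.erase a) (mem_powerset_self I) (mem_powerset.2 (erase_subset a I))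
      (erase_ssubset ha).ne' fun S hS h ↦ hvanish S hS h.1 h.2, Finset.sdiff_self, prod_empty,
      mul_one, sdiff_erase_self ha, prod_singleton, Pi.single_eq_same, mul_comm]
  · rw [sum_eq_single_of_mem I (mem_powerset_self I)
      fun S hS hSI ↦ hvanish S hS hSI (by rwa [erase_eq_of_notMem ha]), Finset.sdiff_self,
      prod_empty, mul_one, add_zero]

lemma unipotentAct_add (lam lam' : α → R) (μ : Finset α → R) :
    unipotentAct (lam + lam') μ = unipotentAct lam (unipotentAct lam' μ) := by
  funext I
  have hfiber : ∀ T ∈ I.powerset, ∏ i ∈ I \ T, (lam' i + lam i) =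
      ∑ S ∈ I.powerset with T ⊆ S, (∏ i ∈ S \ T, lam' i) * ∏ i ∈ I \ S, lam i := by
    intro T hT
    have hdisj : ∀ u ∈ (I \ T).powerset, Disjoint T u := fun u hu ↦
      disjoint_sdiff.mono_right (mem_powerset.1 hu)
    rw [prod_add, ← Icc_eq_filter_powerset, Icc_eq_image_powerset (mem_powerset.1 hT),
      sum_image fun u hu v hv huv ↦ by
        rw [← union_sdiff_cancel_left (hdisj u hu), huv, union_sdiff_cancel_left (hdisj v hv)]]
    refine sum_congr rfl fun u hu ↦ ?_
    rw [union_sdiff_cancel_left (hdisj u hu), sdiff_sdiff_left, sup_eq_union]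
  simp only [unipotentAct, Pi.add_apply, add_comm (lam _), sum_mul, mul_assoc]
  rw [sum_comm' (t' := I.powerset) (s' := fun T ↦ {S ∈ I.powerset | T ⊆ S})]
  · exact sum_congr rfl fun T hT ↦ by rw [hfiber T hT, mul_sum]
  · intro S T
    simp only [mem_powerset, mem_filter]
    exact ⟨fun ⟨hS, hT⟩ ↦ ⟨⟨hS, hT⟩, hT.trans hS⟩, fun ⟨⟨hS, hT⟩, _⟩ ↦ ⟨hS, hT⟩⟩

end UnipotentAct

lemma cumulant_eq_sum_cumulantCoeff {n : ℕ} (μ : Finset (Fin n) → ℂ) (I : Finset (Fin n)) :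
    cumulant μ I = ∑ π : Finpartition I, cumulantCoeff ℂ #π.parts * ∏ B ∈ π.parts, μ B :=
  rfl

lemma cumulant_singleton {n : ℕ} (μ : Finset (Fin n) → ℂ) (i : Fin n) :
    cumulant μ {i} = μ {i} := by
  let := (isAtom_singleton i).uniqueFinpartition (P := .indiscrete (singleton_ne_empty i))
  rw [cumulant, Fintype.sum_subsingleton _ (.indiscrete (singleton_ne_empty i))]
  simp

lemma cumulant_unipotentAct_single_of_two_le {n : ℕ} {μ : Finset (Fin n) → ℂ} (hμ : μ ∅ = 1)
    (j : Fin n) (c : ℂ) {I : Finset (Fin n)} (hI : 2 ≤ #I) :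
    cumulant (unipotentAct (Pi.single j c) μ) I = cumulant μ I := by
  simp only [cumulant_eq_sum_cumulantCoeff, unipotentAct_single]
  by_cases hj : j ∈ I
  · simp only [Finpartition.prod_parts_add_ite_mem _ hj, mul_add, sum_add_distrib,
      mul_left_comm _ c, ← mul_sum, Finpartition.sum_cumulantCoeff_mul_prod_erase_eq_zero hj hI hμ,
      mul_zero, add_zero]
  · refine sum_congr rfl fun π _ ↦ congrArg _ (prod_congr rfl fun B hB ↦ ?_)
    rw [if_neg fun h ↦ hj (π.le hB h), add_zero]

lemma cumulant_unipotentAct_of_two_le {n : ℕ} (lam : Fin n → ℂ) {μ : Finset (Fin n) → ℂ}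
    (hμ : μ ∅ = 1) {I : Finset (Fin n)} (hI : 2 ≤ #I) :
    cumulant (unipotentAct lam μ) I = cumulant μ I := by
  induction lam using Pi.single_induction generalizing μ with
  | zero => rw [unipotentAct_zero]
  | add f g hf hg => rw [unipotentAct_add, hf (by rwa [unipotentAct_apply_empty]), hg hμ]
  | single j c => exact cumulant_unipotentAct_single_of_two_le hμ j c hI

lemma cumulant_unipotentAct_singleton {n : ℕ} (lam : Fin n → ℂ) {μ : Finset (Fin n) → ℂ}
    (hμ : μ ∅ = 1) (i : Fin n) :
    cumulant (unipotentAct lam μ) {i} = cumulant μ {i} + lam i := by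
  rw [cumulant_singleton, cumulant_singleton, unipotentAct_apply_singleton, hμ, one_mul]

theorem unipotent_action_on_cumulants_general {n : ℕ}
    (μ : Finset (Fin n) → ℂ) (hμ : μ ∅ = 1) (lam : Fin n → ℂ)
    (μ' : Finset (Fin n) → ℂ)
    (hμ' : ∀ I : Finset (Fin n),
      μ' I = ∑ S ∈ I.powerset, μ S * ∏ i ∈ I \ S, lam i) :
    (∀ I : Finset (Fin n), 2 ≤ I.card → cumulant μ' I = cumulant μ I) ∧
    (∀ i : Fin n, cumulant μ' {i} = cumulant μ {i} + lam i) := by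
  obtain rfl : μ' = unipotentAct lam μ := funext hμ'
  exact ⟨fun I hI ↦ cumulant_unipotentAct_of_two_le lam hμ hI,
    cumulant_unipotentAct_singleton lam hμ⟩

/-- the unipotent group `U(2)ⁿ` acts on moment tables by
`μ'_I = ∑_{S ⊆ I} μ_S ∏_{i ∈ I∖S} λ_i`; on cumulants it translates the first-order
cumulants by `λ` and fixes all higher cumulants. -/
theorem unipotent_action_on_cumulants {n : ℕ} (hn : 1 ≤ n)
    (μ : Finset (Fin n) → ℂ) (hμ : μ ∅ = 1) (lam : Fin n → ℂ)
    (μ' : Finset (Fin n) → ℂ)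
    (hμ' : ∀ I : Finset (Fin n),
      μ' I = ∑ S ∈ I.powerset, μ S * ∏ i ∈ I \ S, lam i) :
    (∀ I : Finset (Fin n), 2 ≤ I.card → cumulant μ' I = cumulant μ I) ∧
    (∀ i : Fin n, cumulant μ' {i} = cumulant μ {i} + lam i) :=
  unipotent_action_on_cumulants_general μ hμ lam μ' hμ'
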